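/- The map ℤ → GL(2,ℤ) sending n to gₙ is an injective group homomorphism — in particular gₙ·gₘ = g_{n+m} and gₙ = (g₁)ⁿ for all n, m ∈ ℤ — and its image is exactly the set of elements of G_μ of determinant 1. Hence G⁺_μ := {g ∈ G_μ : det g = 1} is an infinite cyclic group generated by g₁ = [[0,−1],[1,2]]. -/

import Mathlib

open Matrix

/-- The matrix `gₙ = [[1−n, −n],[n, 1+n]]`. -/
def gmat (n : ℤ) : Matrix (Fin 2) (Fin 2) ℤ := !![1 - n, -n; n, 1 + n]

/-- The matrix `fₙ = [[1−n, 2−n],[n, −1+n]]`. -/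
def fmat (n : ℤ) : Matrix (Fin 2) (Fin 2) ℤ := !![1 - n, 2 - n; n, n - 1]

/-- `gₙ` as an element of `GL(2,ℤ)` (its inverse is `g₋ₙ`). -/
def gU (n : ℤ) : Matrix.GeneralLinearGroup (Fin 2) ℤ :=
  ⟨gmat n, gmat (-n),
    by ext i j; fin_cases i <;> fin_cases j <;>
      simp [gmat, Matrix.mul_apply, Fin.sum_univ_two, Matrix.one_apply] <;> ring,
    by ext i j; fin_cases i <;> fin_cases j <;>
      simp [gmat, Matrix.mul_apply, Fin.sum_univ_two, Matrix.one_apply] <;> ring⟩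

/-- `fₙ` as an element of `GL(2,ℤ)` (it is its own inverse). -/
def fU (n : ℤ) : Matrix.GeneralLinearGroup (Fin 2) ℤ :=
  ⟨fmat n, fmat n,
    by ext i j; fin_cases i <;> fin_cases j <;>
      simp [fmat, Matrix.mul_apply, Fin.sum_univ_two, Matrix.one_apply] <;> ring,
    by ext i j; fin_cases i <;> fin_cases j <;>
      simp [fmat, Matrix.mul_apply, Fin.sum_univ_two, Matrix.one_apply] <;> ring⟩

/-- Membership in `G_μ`: both column sums of `g` equal `1`. -/
def memGmu (g : Matrix.GeneralLinearGroup (Fin 2) ℤ) : Prop :=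
  (↑g : Matrix (Fin 2) (Fin 2) ℤ) 0 0 + (↑g : Matrix (Fin 2) (Fin 2) ℤ) 1 0 = 1 ∧
  (↑g : Matrix (Fin 2) (Fin 2) ℤ) 0 1 + (↑g : Matrix (Fin 2) (Fin 2) ℤ) 1 1 = 1

lemma gU_coe (n : ℤ) : (↑(gU n) : Matrix (Fin 2) (Fin 2) ℤ) = gmat n := rfl

lemma gU_mul (n m : ℤ) : gU n * gU m = gU (n + m) := by
  ext i j
  fin_cases i <;> fin_cases j <;> simp [gU_coe, gmat, Matrix.mul_apply] <;> ring

lemma gU_zero : gU 0 = 1 := by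
  ext i j
  fin_cases i <;> fin_cases j <;> simp [gU_coe, gmat]

def gHom : Multiplicative ℤ →* Matrix.GeneralLinearGroup (Fin 2) ℤ where
  toFun n := gU n.toAdd
  map_one' := gU_zero
  map_mul' n m := (gU_mul n.toAdd m.toAdd).symm

lemma gU_eq_zpow (n : ℤ) : gU n = gU 1 ^ n := by
  have h : Multiplicative.ofAdd n = Multiplicative.ofAdd 1 ^ n := by
    rw [← ofAdd_zsmul, smul_eq_mul, mul_one]
  exact (congrArg gHom h).trans (map_zpow gHom _ n)

lemma gU_injective : Function.Injective gU := fun n m h => by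
  simpa [gU_coe, gmat] using
    congrArg (fun g : Matrix.GeneralLinearGroup (Fin 2) ℤ => (g : Matrix (Fin 2) (Fin 2) ℤ) 1 0) h

lemma memGmu_gU (n : ℤ) : memGmu (gU n) := by
  constructor <;> simp [gU_coe, gmat]

lemma det_gmat (n : ℤ) : (gmat n).det = 1 := by
  rw [gmat, Matrix.det_fin_two_of]
  ring

/-- With `a = 1 - c` and `b = 1 - d`, the determinant `ad - bc` collapses to `d - c`. -/
lemma eq_gmat_of_colSums_eq_one_of_det_eq_one {M : Matrix (Fin 2) (Fin 2) ℤ}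
    (h₀ : M 0 0 + M 1 0 = 1) (h₁ : M 0 1 + M 1 1 = 1) (hdet : M.det = 1) :
    M = gmat (M 1 0) := by
  rw [Matrix.det_fin_two] at hdet
  have h₁₁ : M 1 1 = 1 + M 1 0 := by linear_combination hdet + M 1 0 * h₁ - M 1 1 * h₀
  have h₀₀ : M 0 0 = 1 - M 1 0 := by linear_combination h₀
  have h₀₁ : M 0 1 = -M 1 0 := by linear_combination h₁ - h₁₁
  ext i j
  fin_cases i <;> fin_cases j <;> simp [gmat, h₀₀, h₀₁, h₁₁]

lemma exists_gU_eq_iff (g : Matrix.GeneralLinearGroup (Fin 2) ℤ) :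
    (∃ n : ℤ, gU n = g) ↔ memGmu g ∧ (g : Matrix (Fin 2) (Fin 2) ℤ).det = 1 := by
  constructor
  · rintro ⟨n, rfl⟩
    exact ⟨memGmu_gU n, det_gmat n⟩
  · rintro ⟨⟨h₀, h₁⟩, hdet⟩
    exact ⟨_, Units.ext (eq_gmat_of_colSums_eq_one_of_det_eq_one h₀ h₁ hdet).symm⟩

/-- `n ↦ gₙ` is an injective group homomorphism `ℤ → GL(2,ℤ)`
(in particular `gₙ·gₘ = g_{n+m}` and `gₙ = (g₁)ⁿ`), whose image is exactly the set
of elements of `G_μ` of determinant `1`.  Hence `G⁺_μ` is infinite cyclic, generated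
by `g₁ = [[0,−1],[1,2]]`. -/
theorem gU_injective_hom_range :
    (∀ n m : ℤ, gU n * gU m = gU (n + m)) ∧
    (∀ n : ℤ, gU n = (gU 1) ^ n) ∧
    Function.Injective gU ∧
    gmat 1 = !![0, -1; 1, 2] ∧
    (∀ g : Matrix.GeneralLinearGroup (Fin 2) ℤ,
      (∃ n : ℤ, gU n = g) ↔
        (memGmu g ∧ (↑g : Matrix (Fin 2) (Fin 2) ℤ).det = 1)) :=
  ⟨gU_mul, gU_eq_zpow, gU_injective, rfl, exists_gU_eq_iff⟩
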